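/- arXiv:2603.24792 — 10 statements merged into one kernel-verified Lean document; each statement's English description precedes it below -/
import Mathlib

section
/- For a fixed nonnegative sequence γ with sum γ_t ≤ 1 and e-values (E_t), define E_S = sum_{i ∈ S} γ_{|S ∩ [i]|} E_i for each finite S ⊆ ℕ. Then (E_S) is an increasing e-collection: (i) if all indices of S are null then E[E_S] ≤ 1; (ii) E_S ≤ E_{S ∪ S'} whenever every element of S' is larger than every element of S. -/
open MeasureTheory

lemma rank_injOn (S : Finset ℕ) :
    Set.InjOn (fun i => (S.filter (· ≤ i)).card) S := by
  have mono : ∀ i ∈ S, ∀ j ∈ S, i < j →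
      (S.filter (· ≤ i)).card < (S.filter (· ≤ j)).card := by
    intro i hi j hj hij
    apply Finset.card_lt_card
    constructor
    · intro x hx
      simp only [Finset.mem_filter] at hx ⊢
      exact ⟨hx.1, le_trans hx.2 hij.le⟩
    · intro hsub
      have := hsub (Finset.mem_filter.2 ⟨hj, le_refl j⟩)
      simp only [Finset.mem_filter] at this
      omega
  intro i hi j hj h
  by_contra hne
  rcases lt_or_gt_of_ne hne with hlt | hlt
  · exact absurd h (mono i hi j hj hlt).ne
  · exact absurd h.symm (mono j hj i hi hlt).ne

lemma rank_sum_le (γ : ℕ → ℝ) (hγ : ∀ t, 0 ≤ γ t) (hγsummable : Summable γ)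
    (hγsum : ∑' t, γ t ≤ 1) (S : Finset ℕ) :
    ∑ i ∈ S, γ ((S.filter (· ≤ i)).card) ≤ 1 := by
  rw [← Finset.sum_image (fun i hi j hj h => rank_injOn S hi hj h)]
  exact le_trans (Summable.sum_le_tsum _ (fun i _ => hγ i) hγsummable) hγsum

/-- The rank-weighted sums `E_S = ∑_{i ∈ S} γ_{|S ∩ [i]|} E_i` form an increasing
e-collection: `𝔼[E_S] ≤ 1` when all indices of `S` are null, and `E_S ≤ E_{S ∪ S'}`
whenever every element of `S'` exceeds every element of `S`. -/
theorem rank_weighted_sums_increasing_ecollection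
    {Ω : Type*} [MeasurableSpace Ω] (μ : Measure Ω) [IsProbabilityMeasure μ]
    (γ : ℕ → ℝ) (hγ : ∀ t, 0 ≤ γ t) (hγsummable : Summable γ) (hγsum : ∑' t, γ t ≤ 1)
    (N : Set ℕ) (E : ℕ → Ω → ℝ)
    (hEnonneg : ∀ t ω, 0 ≤ E t ω)
    (hEint : ∀ t, Integrable (E t) μ)
    (hEnull : ∀ i ∈ N, ∫ ω, E i ω ∂μ ≤ 1)
    (ES : Finset ℕ → Ω → ℝ)
    (hES : ∀ S ω, ES S ω = ∑ i ∈ S, γ ((S.filter (· ≤ i)).card) * E i ω) :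
    (∀ S : Finset ℕ, ↑S ⊆ N → ∫ ω, ES S ω ∂μ ≤ 1) ∧
    (∀ S S' : Finset ℕ, (∀ s ∈ S, ∀ s' ∈ S', s < s') →
      ∀ ω, ES S ω ≤ ES (S ∪ S') ω) := by
  constructor
  · intro S hS
    have : ∫ ω, ES S ω ∂μ = ∑ i ∈ S, γ ((S.filter (· ≤ i)).card) * ∫ ω, E i ω ∂μ := by
      simp_rw [integral_congr_ae (Filter.Eventually.of_forall (hES S))]
      rw [integral_finset_sum _ (fun i _ => (hEint i).const_mul _)]
      simp_rw [MeasureTheory.integral_const_mul]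
    rw [this]
    calc ∑ i ∈ S, γ ((S.filter (· ≤ i)).card) * ∫ ω, E i ω ∂μ
        ≤ ∑ i ∈ S, γ ((S.filter (· ≤ i)).card) := by
          apply Finset.sum_le_sum
          intro i hi
          have h1 : ∫ ω, E i ω ∂μ ≤ 1 := hEnull i (hS hi)
          nlinarith [hγ ((S.filter (· ≤ i)).card)]
      _ ≤ 1 := rank_sum_le γ hγ hγsummable hγsum S
  · intro S S' hlt ω
    rw [hES, hES]
    have hfilter : ∀ i ∈ S, ((S ∪ S').filter (· ≤ i)) = S.filter (· ≤ i) := by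
      intro i hi
      ext x
      simp only [Finset.mem_filter, Finset.mem_union]
      constructor
      · rintro ⟨hx | hx, hxi⟩
        · exact ⟨hx, hxi⟩
        · exact absurd hxi (not_le.2 (hlt i hi x hx))
      · rintro ⟨hx, hxi⟩; exact ⟨Or.inl hx, hxi⟩
    calc ∑ i ∈ S, γ ((S.filter (· ≤ i)).card) * E i ω
        = ∑ i ∈ S, γ (((S ∪ S').filter (· ≤ i)).card) * E i ω := by
          apply Finset.sum_congr rfl
          intro i hi; rw [hfilter i hi]
      _ ≤ ∑ i ∈ S ∪ S', γ (((S ∪ S').filter (· ≤ i)).card) * E i ω := by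
          apply Finset.sum_le_sum_of_subset_of_nonneg Finset.subset_union_left
          intro i _ _
          exact mul_nonneg (hγ _) (hEnonneg i ω)
end

section
/- Let γ be nonnegative with sum γ_t ≤ 1, and for each finite S ⊂ ℕ let (γ_i^S)_{i∈S} satisfy (i) sum_{i∈S} γ_i^S ≤ 1 and γ_i^S ≥ γ_i for all i ∈ S, and (ii) γ_i^S = γ_i^T whenever i ∈ S ∩ T and S ∩ [i] = T ∩ [i]. Define E_S = sum_{i∈S} γ_i^S E_i for e-values (E_t). If a nonempty set R ⊆ [t] is weighted self-consistent, i.e., γ_i E_i ≥ 1/(δ|R|) for all i ∈ R, then for every S ⊆ [t] we have E_S ≥ FDP_S(R)/δ; that is, R lies in the closure collection 𝒞_t. -/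
/-- Weighted self-consistent sets lie in the closure collection built from the
general weighted e-collection `E_S = ∑_{i ∈ S} γ_i^S E_i`. -/
theorem weighted_selfconsistent_mem_closure
    (δ : ℝ) (hδ : δ ∈ Set.Ioc (0 : ℝ) 1)
    (γ : ℕ → ℝ) (hγ : ∀ i, 0 ≤ γ i) (hγsum : ∑' i, γ i ≤ 1)
    (γS : Finset ℕ → ℕ → ℝ)
    (hγS1 : ∀ S : Finset ℕ, ∑ i ∈ S, γS S i ≤ 1)
    (hγSge : ∀ S : Finset ℕ, ∀ i ∈ S, γ i ≤ γS S i)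
    (hγScons : ∀ S T : Finset ℕ, ∀ i, i ∈ S → i ∈ T →
      S.filter (· ≤ i) = T.filter (· ≤ i) → γS S i = γS T i)
    (E : ℕ → ℝ) (hE : ∀ i, 0 ≤ E i)
    (t : ℕ) (R : Finset ℕ) (hR : R ⊆ Finset.Icc 1 t) (hRne : R.Nonempty)
    (hsc : ∀ i ∈ R, 1 / (δ * R.card) ≤ γ i * E i) :
    ∀ S ⊆ Finset.Icc 1 t,
      ((S ∩ R).card : ℝ) / (max R.card 1 : ℕ) ≤ δ * ∑ i ∈ S, γS S i * E i := by
  intro S hS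
  obtain ⟨hδ0, hδ1⟩ := hδ
  have hRcard : (0 : ℝ) < R.card := by
    exact_mod_cast Finset.card_pos.mpr hRne
  have hmax : (max R.card 1 : ℕ) = R.card := by
    have := Finset.card_pos.mpr hRne
    omega
  rw [hmax]
  -- lower bound the sum by the sum over S ∩ R
  have h1 : ∑ i ∈ S ∩ R, γS S i * E i ≤ ∑ i ∈ S, γS S i * E i := by
    apply Finset.sum_le_sum_of_subset_of_nonneg (Finset.inter_subset_left)
    intro i hiS _
    exact mul_nonneg (le_trans (hγ i) (hγSge S i hiS)) (hE i)
  have h2 : ((S ∩ R).card : ℝ) * (1 / (δ * R.card)) ≤ ∑ i ∈ S ∩ R, γS S i * E i := by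
    rw [← nsmul_eq_mul]
    apply Finset.card_nsmul_le_sum
    intro i hi
    have hiS : i ∈ S := Finset.mem_of_mem_inter_left hi
    have hiR : i ∈ R := Finset.mem_of_mem_inter_right hi
    calc (1 : ℝ) / (δ * R.card) ≤ γ i * E i := hsc i hiR
      _ ≤ γS S i * E i := mul_le_mul_of_nonneg_right (hγSge S i hiS) (hE i)
  have h3 : ((S ∩ R).card : ℝ) * (1 / (δ * R.card)) ≤ ∑ i ∈ S, γS S i * E i :=
    le_trans h2 h1
  rw [div_le_iff₀ hRcard] at *
  calc ((S ∩ R).card : ℝ) = ((S ∩ R).card * (1 / (δ * R.card))) * (δ * R.card) := by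
        field_simp
    _ ≤ (∑ i ∈ S, γS S i * E i) * (δ * R.card) := by
        apply mul_le_mul_of_nonneg_right h3
        positivity
    _ = δ * (∑ i ∈ S, γS S i * E i) * R.card := by ring
end

section
/- Fix δ ∈ (0,1], γ nonnegative with sum γ_t ≤ 1, and numbers E_1, ..., E_{t-1} ≥ 0 and a set R_{t-1} ⊆ [t-1]. Suppose R_{t-1} satisfies FDP_S(R_{t-1}) ≤ δ E_S for all S ⊆ [t-1], where E_S = sum_{i∈S} γ_{|S∩[i]|} E_i. Then for every S ⊆ [t-1], 1 + |S ∩ R_{t-1}| − δ E_S (|R_{t-1}| + 1) ≤ 1. Consequently the closed e-LOND test level α_t = min_{S⊆[t-1]} δ γ_{|S|+1}(|R_{t-1}|+1) / (1 + |S∩R_{t-1}| − δ E_S(|R_{t-1}|+1)) is at least δ γ_t (|R_{t-1}|+1) whenever γ is nonincreasing (interpreting terms with nonpositive denominator as +∞). -/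
/-- For closed e-LOND: if `R_{t-1}` satisfies the closure constraints, then every
denominator `1 + |S ∩ R| − δ E_S (|R|+1)` is at most `1`; consequently, for
nonincreasing `γ`, each candidate term in the closed e-LOND minimum is at least
the e-LOND level `δ γ_t (|R|+1)` (terms with nonpositive denominator count as `+∞`). -/
theorem closed_elond_dominates_elond_level
    (δ : ℝ) (hδ : δ ∈ Set.Ioc (0 : ℝ) 1)
    (γ : ℕ → ℝ) (hγ : ∀ k, 0 ≤ γ k) (hγsum : ∑' k, γ k ≤ 1)
    (t : ℕ) (ht : 1 ≤ t)
    (E : ℕ → ℝ) (hE : ∀ i, 0 ≤ E i)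
    (R : Finset ℕ) (hR : R ⊆ Finset.Icc 1 (t - 1))
    (ES : Finset ℕ → ℝ)
    (hES : ∀ S, ES S = ∑ i ∈ S, γ ((S.filter (· ≤ i)).card) * E i)
    (hclosed : ∀ S ⊆ Finset.Icc 1 (t - 1),
      ((S ∩ R).card : ℝ) / (max R.card 1 : ℕ) ≤ δ * ES S) :
    (∀ S ⊆ Finset.Icc 1 (t - 1),
      1 + ((S ∩ R).card : ℝ) - δ * ES S * (R.card + 1) ≤ 1) ∧
    (Antitone γ → ∀ S ⊆ Finset.Icc 1 (t - 1),
      0 < 1 + ((S ∩ R).card : ℝ) - δ * ES S * (R.card + 1) →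
      δ * γ t * (R.card + 1) ≤
        δ * γ (S.card + 1) * (R.card + 1) /
          (1 + ((S ∩ R).card : ℝ) - δ * ES S * (R.card + 1))) := by
  have hESnn : ∀ S : Finset ℕ, 0 ≤ ES S := by
    intro S
    rw [hES S]
    exact Finset.sum_nonneg fun i _ => mul_nonneg (hγ _) (hE i)
  have key : ∀ S ⊆ Finset.Icc 1 (t - 1),
      1 + ((S ∩ R).card : ℝ) - δ * ES S * (R.card + 1) ≤ 1 := by
    intro S hS
    have h1 := hclosed S hS
    have hmax : (0 : ℝ) < (max R.card 1 : ℕ) := by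
      have : 1 ≤ max R.card 1 := le_max_right _ _
      exact_mod_cast this
    have h2 : ((S ∩ R).card : ℝ) ≤ δ * ES S * (max R.card 1 : ℕ) := by
      rw [div_le_iff₀ hmax] at h1
      linarith
    have h3 : ((max R.card 1 : ℕ) : ℝ) ≤ (R.card : ℝ) + 1 := by
      have : max R.card 1 ≤ R.card + 1 := max_le (Nat.le_succ _) (Nat.one_le_iff_ne_zero.mpr (Nat.succ_ne_zero _))
      exact_mod_cast this
    have h4 : δ * ES S * (max R.card 1 : ℕ) ≤ δ * ES S * ((R.card : ℝ) + 1) :=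
      mul_le_mul_of_nonneg_left h3 (mul_nonneg hδ.1.le (hESnn S))
    linarith
  refine ⟨key, fun hanti S hS hpos => ?_⟩
  have hcard : S.card + 1 ≤ t := by
    have := Finset.card_le_card hS
    rw [Nat.card_Icc] at this
    omega
  have hγle : γ t ≤ γ (S.card + 1) := hanti hcard
  have hnum : 0 ≤ δ * γ (S.card + 1) * ((R.card : ℝ) + 1) :=
    mul_nonneg (mul_nonneg hδ.1.le (hγ _)) (by positivity)
  rw [le_div_iff₀ hpos]
  calc δ * γ t * ((R.card : ℝ) + 1) * (1 + ((S ∩ R).card : ℝ) - δ * ES S * (R.card + 1))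
      ≤ δ * γ t * ((R.card : ℝ) + 1) * 1 := by
        apply mul_le_mul_of_nonneg_left (key S hS)
        exact mul_nonneg (mul_nonneg hδ.1.le (hγ t)) (by positivity)
    _ = δ * γ t * ((R.card : ℝ) + 1) := mul_one _
    _ ≤ δ * γ (S.card + 1) * ((R.card : ℝ) + 1) := by
        apply mul_le_mul_of_nonneg_right _ (by positivity)
        exact mul_le_mul_of_nonneg_left hγle hδ.1.le
end

section
/- For e-values E_t and test level α_t defined by the closed e-LOND rule α_t = min_{S⊆[t-1]} δγ_{|S|+1}(|R_{t-1}|+1)/(1 + |S∩R_{t-1}| − δ E_S(|R_{t-1}|+1)) (with E_S = sum_{i∈S} γ_{|S∩[i]|}E_i), the event E_t ≥ α_t^{-1} holds if and only if for every S ⊆ [t-1], FDP_{S∪{t}}(R_{t-1} ∪ {t}) ≤ δ E_{S∪{t}}; that is, rejecting H_t is equivalent to R_{t-1} ∪ {t} belonging to the closure collection 𝒞_t. -/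
/-- Rejecting `H_t` at the closed e-LOND level (i.e. `E_t ≥ α_t⁻¹`, unfolded as
`E_t` exceeding every active candidate term of the maximum) is equivalent to
`R_{t-1} ∪ {t}` belonging to the closure collection `𝒞_t`. -/
theorem closed_elond_rejection_iff_closure
    (δ : ℝ) (hδ : δ ∈ Set.Ioc (0 : ℝ) 1)
    (γ : ℕ → ℝ) (hγpos : ∀ k, 0 < γ k) (hγsum : ∑' k, γ k ≤ 1)
    (t : ℕ) (ht : 1 ≤ t)
    (E : ℕ → ℝ) (hE : ∀ i, 0 ≤ E i)
    (R : Finset ℕ) (hR : R ⊆ Finset.Icc 1 (t - 1))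
    (ES : Finset ℕ → ℝ)
    (hES : ∀ S, ES S = ∑ i ∈ S, γ ((S.filter (· ≤ i)).card) * E i)
    (hclosed : ∀ S ⊆ Finset.Icc 1 (t - 1),
      ((S ∩ R).card : ℝ) / (max R.card 1 : ℕ) ≤ δ * ES S) :
    (∀ S ⊆ Finset.Icc 1 (t - 1),
        0 < 1 + ((S ∩ R).card : ℝ) - δ * ES S * (R.card + 1) →
        (1 + ((S ∩ R).card : ℝ) - δ * ES S * (R.card + 1)) /
          (δ * γ (S.card + 1) * (R.card + 1)) ≤ E t)
    ↔
    (∀ S ⊆ Finset.Icc 1 (t - 1),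
        (((S ∪ {t}) ∩ (R ∪ {t})).card : ℝ) / (max (R ∪ {t}).card 1 : ℕ)
          ≤ δ * ES (S ∪ {t})) := by
  have hδ0 : 0 < δ := hδ.1
  have htR : t ∉ R := by
    intro h
    have := (Finset.mem_Icc.mp (hR h)).2
    omega
  apply forall₂_congr
  intro S hS
  have htS : t ∉ S := by
    intro h
    have := (Finset.mem_Icc.mp (hS h)).2
    omega
  have hSlt : ∀ i ∈ S, i < t := by
    intro i hi
    have := (Finset.mem_Icc.mp (hS hi)).2
    omega
  have hU : S ∪ {t} = insert t S := by
    rw [Finset.union_comm, ← Finset.insert_eq]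
  -- intersection set
  have hI : (S ∪ {t}) ∩ (R ∪ {t}) = insert t (S ∩ R) := by
    ext x
    simp only [Finset.mem_inter, Finset.mem_union, Finset.mem_singleton,
      Finset.mem_insert]
    tauto
  have htSR : t ∉ S ∩ R := fun h => htS (Finset.mem_inter.mp h).1
  have hIcard : ((S ∪ {t}) ∩ (R ∪ {t})).card = (S ∩ R).card + 1 := by
    rw [hI, Finset.card_insert_of_notMem htSR]
  have hRcard : (R ∪ {t}).card = R.card + 1 := by
    rw [Finset.union_comm, ← Finset.insert_eq, Finset.card_insert_of_notMem htR]
  have hmax : max (R ∪ {t}).card 1 = R.card + 1 := by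
    rw [hRcard]; omega
  -- ES of the union
  have hESU : ES (S ∪ {t}) = ES S + γ (S.card + 1) * E t := by
    rw [hES, hES, hU, Finset.sum_insert htS]
    have h1 : (insert t S).filter (· ≤ t) = insert t S := by
      apply Finset.filter_eq_self.mpr
      intro x hx
      rcases Finset.mem_insert.mp hx with h | h
      · simp [h]
      · exact Nat.le_of_lt (hSlt x h)
    have h2 : ∀ i ∈ S, (insert t S).filter (· ≤ i) = S.filter (· ≤ i) := by
      intro i hi
      rw [Finset.filter_insert]
      have : ¬ (t ≤ i) := Nat.not_le.mpr (hSlt i hi)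
      simp [this]
    rw [h1, Finset.card_insert_of_notMem htS]
    rw [Finset.sum_congr rfl (fun i hi => by rw [h2 i hi])]
    ring
  -- abbreviations
  set m : ℝ := ((S ∩ R).card : ℝ) with hm
  set c : ℝ := (R.card : ℝ) with hc
  have hc1 : (0 : ℝ) < c + 1 := by positivity
  have hγ' : 0 < γ (S.card + 1) := hγpos _
  have hD : 0 < δ * γ (S.card + 1) * (c + 1) := by positivity
  have hRHS : ((((S ∪ {t}) ∩ (R ∪ {t})).card : ℝ) / (max (R ∪ {t}).card 1 : ℕ)
      ≤ δ * ES (S ∪ {t}))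
      ↔ 1 + m - δ * ES S * (c + 1) ≤ E t * (δ * γ (S.card + 1) * (c + 1)) := by
    rw [hIcard, hmax, hESU]
    push_cast
    rw [div_le_iff₀ hc1]
    constructor <;> intro h <;> nlinarith
  rw [hRHS]
  constructor
  · intro h
    by_cases hA : 0 < 1 + m - δ * ES S * (c + 1)
    · have := h hA
      rwa [div_le_iff₀ hD] at this
    · have h1 : 1 + m - δ * ES S * (c + 1) ≤ 0 := le_of_not_gt hA
      have h2 : 0 ≤ E t * (δ * γ (S.card + 1) * (c + 1)) :=
        mul_nonneg (hE t) hD.le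
      linarith
  · intro h _
    rw [div_le_iff₀ hD]
    exact h
end

section
/- Define the dynamic program v(i,0) = 0 and v(i,k) = max{ v(i-1,k), v(i-1,k-1) + 1_{i ∈ R} − δ γ_k E_i (|R|+1) } for 1 ≤ k ≤ i (with v(i-1,k) = −∞ if k > i−1). Then for all i and 0 ≤ k ≤ i, v(i,k) = max over S ⊆ [i] with |S| = k of (|S ∩ R| − δ E_S (|R|+1)), where E_S = sum_{j∈S} γ_{|S∩[j]|} E_j. -/
/-- Correctness of the dynamic program for closed e-LOND: `v i k` equals the
maximum of `|S ∩ R| − δ E_S (|R|+1)` over `S ⊆ [i]` with `|S| = k` (stated as: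
`v i k` is an upper bound on all such values and is attained by some such `S`). -/
theorem closed_elond_dp_correct
    (δ : ℝ) (hδ : 0 < δ)
    (γ : ℕ → ℝ) (hγ : ∀ k, 0 ≤ γ k)
    (E : ℕ → ℝ) (hE : ∀ j, 0 ≤ E j)
    (R : Finset ℕ)
    (ES : Finset ℕ → ℝ)
    (hES : ∀ S, ES S = ∑ j ∈ S, γ ((S.filter (· ≤ j)).card) * E j)
    (c : ℕ → ℕ → ℝ)
    (hc : ∀ i k, c i k = (if i ∈ R then (1 : ℝ) else 0) - δ * γ k * E i * (R.card + 1))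
    (v : ℕ → ℕ → ℝ)
    (hv0 : ∀ i, v i 0 = 0)
    (hvrec : ∀ i, 1 ≤ i → ∀ k, 1 ≤ k → k ≤ i →
      v i k = if k ≤ i - 1 then max (v (i - 1) k) (v (i - 1) (k - 1) + c i k)
              else v (i - 1) (k - 1) + c i k) :
    ∀ i : ℕ, ∀ k ≤ i,
      (∀ S ⊆ Finset.Icc 1 i, S.card = k →
        ((S ∩ R).card : ℝ) - δ * ES S * (R.card + 1) ≤ v i k) ∧
      (∃ S ⊆ Finset.Icc 1 i, S.card = k ∧
        v i k = ((S ∩ R).card : ℝ) - δ * ES S * (R.card + 1)) := by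
  have hESempty : ES ∅ = 0 := by simp [hES]
  have key : ∀ (i : ℕ) (S' : Finset ℕ), S' ⊆ Finset.Icc 1 i →
      ((insert (i+1) S' ∩ R).card : ℝ) - δ * ES (insert (i+1) S') * (R.card + 1)
      = ((S' ∩ R).card : ℝ) - δ * ES S' * (R.card + 1) + c (i+1) (S'.card + 1) := by
    intro i S' hS'
    have hnot : i+1 ∉ S' := by
      intro h
      have := hS' h
      rw [Finset.mem_Icc] at this
      omega
    have h1 : ((insert (i+1) S' ∩ R).card : ℝ)
        = ((S' ∩ R).card : ℝ) + (if i+1 ∈ R then (1:ℝ) else 0) := by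
      by_cases h : i+1 ∈ R
      · rw [Finset.insert_inter_of_mem h,
          Finset.card_insert_of_notMem (by simp [hnot])]
        push_cast
        simp [h]
      · rw [Finset.insert_inter_of_notMem h]
        simp [h]
    have h2 : ES (insert (i+1) S') = ES S' + γ (S'.card+1) * E (i+1) := by
      rw [hES, hES, Finset.sum_insert hnot]
      have hfull : ((insert (i+1) S').filter (· ≤ i+1)).card = S'.card + 1 := by
        have heq : (insert (i+1) S').filter (· ≤ i+1) = insert (i+1) S' := by
          apply Finset.filter_true_of_mem
          intro x hx
          rcases Finset.mem_insert.mp hx with h | h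
          · omega
          · have := hS' h
            simp [Finset.mem_Icc] at this
            omega
        rw [heq, Finset.card_insert_of_notMem hnot]
      rw [hfull]
      have hsum : ∑ j ∈ S', γ (((insert (i+1) S').filter (· ≤ j)).card) * E j
          = ∑ j ∈ S', γ ((S'.filter (· ≤ j)).card) * E j := by
        apply Finset.sum_congr rfl
        intro j hj
        have hji : j ≤ i := by
          have := hS' hj
          simp [Finset.mem_Icc] at this
          omega
        rw [Finset.filter_insert, if_neg (by simp; omega)]
      rw [hsum]
      ring
    rw [h1, h2, hc]
    ring
  intro i
  induction i with
  | zero =>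
    intro k hk
    interval_cases k
    constructor
    · intro S hS hScard
      have hS0 : S = ∅ := Finset.card_eq_zero.mp hScard
      subst hS0
      simp [hESempty, hv0]
    · exact ⟨∅, by simp, by simp, by simp [hESempty, hv0]⟩
  | succ i ih =>
    intro k hk
    rcases Nat.eq_zero_or_pos k with rfl | hkpos
    · constructor
      · intro S hS hScard
        have hS0 : S = ∅ := Finset.card_eq_zero.mp hScard
        subst hS0
        simp [hESempty, hv0]
      · exact ⟨∅, by simp, by simp, by simp [hESempty, hv0]⟩
    · have hrec := hvrec (i+1) (by omega) k hkpos hk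
      simp only [Nat.add_sub_cancel] at hrec
      obtain ⟨ub2, S2, hS2sub, hS2c, hS2eq⟩ := ih (k-1) (by omega)
      -- helper: bound for S containing i+1
      have erase_bound : ∀ S ⊆ Finset.Icc 1 (i+1), S.card = k → i+1 ∈ S →
          ((S ∩ R).card : ℝ) - δ * ES S * (R.card + 1) ≤ v i (k-1) + c (i+1) k := by
        intro S hSsub hScard hmem
        set S' := S.erase (i+1) with hS'def
        have hins : S = insert (i+1) S' := (Finset.insert_erase hmem).symm
        have hS'sub : S' ⊆ Finset.Icc 1 i := by
          intro x hx
          have hxS := Finset.mem_of_mem_erase hx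
          have hxne := Finset.ne_of_mem_erase hx
          have := hSsub hxS
          simp [Finset.mem_Icc] at this ⊢
          omega
        have hS'c : S'.card = k - 1 := by
          rw [hS'def, Finset.card_erase_of_mem hmem, hScard]
        have hkey := key i S' hS'sub
        rw [hS'c, show k - 1 + 1 = k by omega] at hkey
        rw [hins, hkey]
        have := ub2 S' hS'sub hS'c
        linarith
      -- helper: witness via insert
      have insert_witness :
          insert (i+1) S2 ⊆ Finset.Icc 1 (i+1) ∧ (insert (i+1) S2).card = k ∧
          v i (k-1) + c (i+1) k =
            (((insert (i+1) S2) ∩ R).card : ℝ) - δ * ES (insert (i+1) S2) * (R.card + 1) := by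
        have hnot : i+1 ∉ S2 := by
          intro h
          have := hS2sub h
          rw [Finset.mem_Icc] at this
          omega
        refine ⟨?_, ?_, ?_⟩
        · intro x hx
          rcases Finset.mem_insert.mp hx with rfl | h
          · simp [Finset.mem_Icc]
          · exact Finset.Icc_subset_Icc_right (by omega) (hS2sub h)
        · rw [Finset.card_insert_of_notMem hnot, hS2c]
          omega
        · have hkey := key i S2 hS2sub
          rw [hS2c, show k - 1 + 1 = k by omega] at hkey
          rw [hkey, hS2eq]
      obtain ⟨hw1, hw2, hw3⟩ := insert_witness
      by_cases hki : k ≤ i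
      · rw [if_pos hki] at hrec
        obtain ⟨ub1, S1, hS1sub, hS1c, hS1eq⟩ := ih k hki
        constructor
        · intro S hSsub hScard
          by_cases hmem : i+1 ∈ S
          · rw [hrec]
            exact le_trans (erase_bound S hSsub hScard hmem) (le_max_right _ _)
          · have hsub : S ⊆ Finset.Icc 1 i := by
              intro x hx
              have hxI := hSsub hx
              simp [Finset.mem_Icc] at hxI ⊢
              refine ⟨hxI.1, ?_⟩
              rcases Nat.lt_or_ge x (i+1) with h | h
              · omega
              · exfalso
                have : x = i+1 := by omega
                exact hmem (this ▸ hx)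
            rw [hrec]
            exact le_trans (ub1 S hsub hScard) (le_max_left _ _)
        · rw [hrec]
          rcases max_cases (v i k) (v i (k-1) + c (i+1) k) with ⟨heq, _⟩ | ⟨heq, _⟩
          · exact ⟨S1, hS1sub.trans (Finset.Icc_subset_Icc_right (by omega)), hS1c,
              by rw [heq, hS1eq]⟩
          · exact ⟨insert (i+1) S2, hw1, hw2, by rw [heq, hw3]⟩
      · rw [if_neg hki] at hrec
        constructor
        · intro S hSsub hScard
          have hmem : i+1 ∈ S := by
            by_contra hmem
            have hsub : S ⊆ Finset.Icc 1 i := by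
              intro x hx
              have hxI := hSsub hx
              simp [Finset.mem_Icc] at hxI ⊢
              refine ⟨hxI.1, ?_⟩
              rcases Nat.lt_or_ge x (i+1) with h | h
              · omega
              · exfalso
                have : x = i+1 := by omega
                exact hmem (this ▸ hx)
            have := Finset.card_le_card hsub
            simp [Nat.card_Icc] at this
            omega
          rw [hrec]
          exact erase_bound S hSsub hScard hmem
        · exact ⟨insert (i+1) S2, hw1, hw2, by rw [hrec, hw3]⟩
end

section
/- Suppose donation e-LOND and e-LOND are run on the same e-value stream with the same δ and γ, with levels α_t^{d} = δγ_t(|R^d_{t-1}|+1)/(1 − min(δ(|R^d_{t-1}|+1)W̄_t, 1)) and α_t^{e} = δγ_t max(|R^e_{t-1}|,1) and rejection rule E_t ≥ α_t^{-1}, with R^d_0 = R^e_0 = ∅, and assume W̄_t ≥ 0 at every step. Then R^e_t ⊆ R^d_t for all t. -/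
open Classical in
/-- Donation e-LOND makes at least the discoveries of e-LOND: running both on the
same e-value stream with the same `δ` and `γ`, with `W̄_t ≥ 0` at every step,
the e-LOND rejection set is contained in the donation e-LOND rejection set. -/
theorem donation_elond_improves_elond
    (δ : ℝ) (hδ : δ ∈ Set.Ioc (0 : ℝ) 1)
    (γ : ℕ → ℝ) (hγ : ∀ t, 0 ≤ γ t)
    (E : ℕ → ℝ) (hE : ∀ t, 0 ≤ E t)
    (W : ℕ → ℝ) (hW : ∀ t, 0 ≤ W t)
    (Rd Re : ℕ → Finset ℕ)
    (hRd0 : Rd 0 = ∅) (hRe0 : Re 0 = ∅)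
    (αd αe : ℕ → ℝ)
    (hαd : ∀ t, αd t = δ * γ t * ((Rd (t - 1)).card + 1) /
      (1 - min (δ * ((Rd (t - 1)).card + 1) * W t) 1))
    (hαe : ∀ t, αe t = δ * γ t * ((max (Re (t - 1)).card 1 : ℕ) : ℝ))
    (hRd : ∀ t, 1 ≤ t → Rd t = if (αd t)⁻¹ ≤ E t then Rd (t - 1) ∪ {t} else Rd (t - 1))
    (hRe : ∀ t, 1 ≤ t → Re t = if (αe t)⁻¹ ≤ E t then Re (t - 1) ∪ {t} else Re (t - 1)) :
    ∀ t, Re t ⊆ Rd t := by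
  obtain ⟨hδ0, hδ1⟩ := hδ
  intro t
  induction t with
  | zero => simp [hRd0, hRe0]
  | succ n ih =>
    have ht : 1 ≤ n + 1 := Nat.le_add_left 1 n
    have hsub : n + 1 - 1 = n := rfl
    -- key: if e-LOND rejects then donation e-LOND rejects
    have key : (αe (n + 1))⁻¹ ≤ E (n + 1) → (αd (n + 1))⁻¹ ≤ E (n + 1) := by
      intro h
      set den := 1 - min (δ * ((Rd n).card + 1) * W (n + 1)) 1 with hden
      have hden0 : 0 ≤ den := by
        have : min (δ * ((Rd n).card + 1) * W (n + 1)) 1 ≤ 1 := min_le_right _ _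
        linarith
      rcases eq_or_lt_of_le hden0 with hz | hpos
      · have : αd (n + 1) = 0 := by
          rw [hαd, hsub, ← hden, ← hz, div_zero]
        rw [this, inv_zero]; exact hE _
      · -- numerator comparison
        have hcard : (Re n).card ≤ (Rd n).card := Finset.card_le_card ih
        have hnum : δ * γ (n + 1) * ((max (Re n).card 1 : ℕ) : ℝ)
            ≤ δ * γ (n + 1) * ((Rd n).card + 1) := by
          apply mul_le_mul_of_nonneg_left _ (mul_nonneg hδ0.le (hγ (n + 1)))
          have : (max (Re n).card 1 : ℕ) ≤ (Rd n).card + 1 := by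
            rcases max_cases (Re n).card 1 with ⟨h1, _⟩ | ⟨h1, _⟩ <;> omega
          calc ((max (Re n).card 1 : ℕ) : ℝ) ≤ (((Rd n).card + 1 : ℕ) : ℝ) := by
                exact_mod_cast this
            _ = ((Rd n).card : ℝ) + 1 := by push_cast; ring
        have hαele : αe (n + 1) ≤ αd (n + 1) := by
          rw [hαd, hαe, hsub, ← hden]
          calc δ * γ (n + 1) * ((max (Re n).card 1 : ℕ) : ℝ)
              ≤ δ * γ (n + 1) * ((Rd n).card + 1) := hnum
            _ ≤ δ * γ (n + 1) * ((Rd n).card + 1) / den := by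
                rw [le_div_iff₀ hpos]
                have hle1 : den ≤ 1 := by
                  have h0 : 0 ≤ min (δ * ((Rd n).card + 1) * W (n + 1)) 1 := by
                    apply le_min _ zero_le_one
                    have : (0:ℝ) ≤ ((Rd n).card : ℝ) + 1 := by positivity
                    have := mul_nonneg (mul_nonneg hδ0.le this) (hW (n + 1))
                    linarith
                  simp only [hden]; linarith
                nlinarith [mul_nonneg (mul_nonneg hδ0.le (hγ (n+1)))
                  (by positivity : (0:ℝ) ≤ ((Rd n).card : ℝ) + 1)]
        have hδγ : (0:ℝ) ≤ δ * γ (n + 1) := mul_nonneg hδ0.le (hγ (n + 1))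
        rcases eq_or_lt_of_le hδγ with hg | hg
        · have : αd (n + 1) = 0 := by
            rw [hαd, hsub, ← hden, ← hg]
            simp
          rw [this, inv_zero]; exact hE _
        · have hαe0 : 0 < αe (n + 1) := by
            rw [hαe, hsub]
            have : (0:ℝ) < ((max (Re n).card 1 : ℕ) : ℝ) := by
              have : 1 ≤ max (Re n).card 1 := le_max_right _ _
              exact_mod_cast Nat.lt_of_lt_of_le Nat.zero_lt_one this
            positivity
          have hαd0 : 0 < αd (n + 1) := lt_of_lt_of_le hαe0 hαele
          have hinv : (αd (n + 1))⁻¹ ≤ (αe (n + 1))⁻¹ :=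
            inv_anti₀ hαe0 hαele
          exact hinv.trans h
    rw [hRd _ ht, hRe _ ht, hsub]
    by_cases h : (αe (n + 1))⁻¹ ≤ E (n + 1)
    · rw [if_pos h, if_pos (key h)]
      exact Finset.union_subset_union ih (subset_refl _)
    · rw [if_neg h]
      split
      · exact ih.trans Finset.subset_union_left
      · exact ih
end

section
/- The r-LOND calibrator f_t(p) = 1{p ≤ δγ_t t/ℓ_t} / ( δγ_t ⌈ max(p ℓ_t/(δγ_t), 1) ⌉ ), where ℓ_t = sum_{i=1}^t 1/i, maps a uniformly distributed (or superuniform) p-value P to an e-value: if P satisfies Pr(P ≤ s) ≤ s for all s ∈ [0,1], then E[f_t(P)] ≤ 1. -/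
open MeasureTheory

/-- The `t`-th harmonic number `ℓ_t = ∑_{i=1}^t 1/i`. -/
noncomputable def harmonic' (t : ℕ) : ℝ := ∑ i ∈ Finset.Icc 1 t, (1 : ℝ) / i

/-- The r-LOND calibrator
`f_t(p) = 1{p ≤ δγ_t t/ℓ_t} / (δγ_t ⌈max(p ℓ_t/(δγ_t), 1)⌉)`. -/
noncomputable def rlondCalibrator (δ γ : ℝ) (t : ℕ) (p : ℝ) : ℝ :=
  (if p ≤ δ * γ * t / harmonic' t then (1 : ℝ) else 0) /
    (δ * γ * (⌈max (p * harmonic' t / (δ * γ)) 1⌉ : ℝ))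

/-! Abel summation. With `a j = 1/j` for `j ≤ t` and `a (t + 1) = 0`, the calibrator is
`f_t(p) = ∑_{j=1}^t (a j - a (j+1)) / (δγ) * 1{p ≤ δγ j / ℓ_t}`: the indicator at level `j` is on
exactly when `j ≥ ⌈max(p ℓ_t/(δγ), 1)⌉ = k`, and the sum telescopes to `a k / (δγ)`. The weights
are nonnegative, so superuniformity bounds `E f_t(P)` by the same sum with each indicator
replaced by its threshold, and `∑_{j=1}^t (a j - a (j+1)) j = ∑_{j=1}^t a j = ℓ_t`. -/

open Finset

theorem Finset.sum_Icc_ite_le_sub_succ {M : Type*} [AddCommGroup M] (a : ℕ → M) {m t : ℕ}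
    (hm : 1 ≤ m) (hmt : m ≤ t) :
    ∑ j ∈ Icc 1 t, (if m ≤ j then a j - a (j + 1) else 0) = a m - a (t + 1) := by
  have hfilter : {j ∈ Icc 1 t | m ≤ j} = Icc m t := by
    ext j; simp only [mem_filter, mem_Icc]; omega
  rw [← sum_filter, hfilter, ← neg_sub, ← sum_Icc_sub hmt, ← sum_neg_distrib]
  simp only [neg_sub]

theorem Finset.sum_Icc_sub_succ_mul_self {R : Type*} [CommRing R] (a : ℕ → R) (t : ℕ) :
    ∑ j ∈ Icc 1 t, (a j - a (j + 1)) * j = ∑ j ∈ Icc 1 t, a j - t * a (t + 1) := by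
  induction t with
  | zero => simp
  | succ n ih =>
    rw [sum_Icc_succ_top (by omega), sum_Icc_succ_top (by omega), ih]
    push_cast
    ring

noncomputable def truncatedInv (t j : ℕ) : ℝ := if j ≤ t then (j : ℝ)⁻¹ else 0

theorem sum_truncatedInv (t : ℕ) : ∑ j ∈ Icc 1 t, truncatedInv t j = harmonic' t :=
  sum_congr rfl fun j hj => by simp [truncatedInv, (mem_Icc.mp hj).2]

theorem truncatedInv_succ_self (t : ℕ) : truncatedInv t (t + 1) = 0 := by
  simp [truncatedInv]

theorem truncatedInv_succ_le {t j : ℕ} (hj : 1 ≤ j) :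
    truncatedInv t (j + 1) ≤ truncatedInv t j := by
  unfold truncatedInv
  split_ifs
  · exact inv_anti₀ (by positivity) (by simp)
  · omega
  · positivity
  · rfl

theorem harmonic'_pos {t : ℕ} (ht : 1 ≤ t) : 0 < harmonic' t :=
  sum_pos (fun i hi => by have := (mem_Icc.mp hi).1; positivity) ⟨1, mem_Icc.mpr ⟨le_rfl, ht⟩⟩

theorem Int.toNat_ceil_max_one_le_iff {α : Type*} [Field α] [LinearOrder α]
    [IsStrictOrderedRing α] [FloorRing α] {x : α} {j : ℕ} (hj : 1 ≤ j) :
    ⌈max x 1⌉.toNat ≤ j ↔ x ≤ j := by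
  rw [Int.toNat_le, Int.ceil_le, max_le_iff, Int.cast_natCast]
  exact and_iff_left (by exact_mod_cast hj)

theorem rlondCalibrator_eq_sum {δ γ : ℝ} (hc : 0 < δ * γ) {t : ℕ} (ht : 1 ≤ t) (p : ℝ) :
    rlondCalibrator δ γ t p =
      ∑ j ∈ Icc 1 t, (truncatedInv t j - truncatedInv t (j + 1)) / (δ * γ) *
        (if p ≤ δ * γ * j / harmonic' t then 1 else 0) := by
  have hL := harmonic'_pos ht
  set x := p * harmonic' t / (δ * γ)
  set n := ⌈max x 1⌉.toNat
  have hn : (⌈max x 1⌉ : ℝ) = n := by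
    rw [← Int.cast_natCast, Int.toNat_of_nonneg (Int.ceil_nonneg (by positivity))]
  have hn₁ : 1 ≤ n := Int.lt_toNat.mpr (Int.ceil_pos.mpr (lt_max_of_lt_right one_pos))
  have hle_iff {j : ℕ} (hj : 1 ≤ j) : p ≤ δ * γ * j / harmonic' t ↔ n ≤ j := by
    rw [Int.toNat_ceil_max_one_le_iff hj, div_le_iff₀ hc, le_div_iff₀ hL, mul_comm (j : ℝ)]
  have hsum : ∑ j ∈ Icc 1 t, (truncatedInv t j - truncatedInv t (j + 1)) / (δ * γ) *
      (if p ≤ δ * γ * j / harmonic' t then 1 else 0) =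
      (∑ j ∈ Icc 1 t, if n ≤ j then truncatedInv t j - truncatedInv t (j + 1) else 0) /
        (δ * γ) := by
    rw [sum_div]
    refine sum_congr rfl fun j hj => ?_
    by_cases hnj : n ≤ j <;> simp [hnj, hle_iff (mem_Icc.mp hj).1]
  rw [rlondCalibrator, hn, hsum]
  by_cases hnt : n ≤ t
  · rw [if_pos ((hle_iff ht).mpr hnt), sum_Icc_ite_le_sub_succ _ hn₁ hnt, truncatedInv_succ_self,
      sub_zero, truncatedInv, if_pos hnt]
    field_simp
  · rw [if_neg (mt (hle_iff ht).mp hnt),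
      sum_eq_zero fun j hj => if_neg (by have := (mem_Icc.mp hj).2; omega)]
    simp

theorem integral_sum_mul_ite_le {Ω ι : Type*} [MeasurableSpace Ω] {μ : Measure Ω}
    [IsFiniteMeasure μ] {P : Ω → ℝ} (hP : Measurable P) {I : Finset ι} {w s : ι → ℝ}
    (hw : ∀ i ∈ I, 0 ≤ w i) (hs : ∀ i ∈ I, μ.real {ω | P ω ≤ s i} ≤ s i) :
    ∫ ω, ∑ i ∈ I, w i * (if P ω ≤ s i then 1 else 0) ∂μ ≤ ∑ i ∈ I, w i * s i := by
  have hind (i : ι) (ω : Ω) :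
      (if P ω ≤ s i then (1 : ℝ) else 0) = {ω | P ω ≤ s i}.indicator 1 ω := by
    simp [Set.indicator_apply]
  have hmeas (i : ι) : MeasurableSet {ω | P ω ≤ s i} := hP measurableSet_Iic
  simp only [hind]
  rw [integral_finsetSum _ fun i _ => ((integrable_const 1).indicator (hmeas i)).const_mul _]
  refine sum_le_sum fun i hi => ?_
  rw [integral_const_mul, integral_indicator_one (hmeas i)]
  exact mul_le_mul_of_nonneg_left (hs i hi) (hw i hi)

/-- The r-LOND calibrator maps a superuniform p-value to an e-value. -/
theorem rlond_calibrator_evalue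
    {Ω : Type*} [MeasurableSpace Ω] (μ : Measure Ω) [IsProbabilityMeasure μ]
    (δ : ℝ) (hδ : δ ∈ Set.Ioc (0 : ℝ) 1)
    (γ : ℝ) (hγ : 0 < γ)
    (t : ℕ) (ht : 1 ≤ t)
    (P : Ω → ℝ) (hP : Measurable P)
    (hsuper : ∀ s ∈ Set.Icc (0 : ℝ) 1, (μ {ω | P ω ≤ s}).toReal ≤ s) :
    ∫ ω, rlondCalibrator δ γ t (P ω) ∂μ ≤ 1 := by
  have hc : 0 < δ * γ := mul_pos hδ.1 hγ
  have hL := harmonic'_pos ht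
  simp_rw [rlondCalibrator_eq_sum hc ht]
  calc _ ≤ ∑ j ∈ Icc 1 t, (truncatedInv t j - truncatedInv t (j + 1)) / (δ * γ) *
        (δ * γ * j / harmonic' t) := by
        refine integral_sum_mul_ite_le hP (fun j hj => div_nonneg
          (sub_nonneg.mpr (truncatedInv_succ_le (mem_Icc.mp hj).1)) hc.le) fun j _ => ?_
        obtain h | h := le_or_gt (δ * γ * j / harmonic' t) 1
        · exact hsuper _ ⟨by positivity, h⟩
        · exact measureReal_le_one.trans h.le
    _ = (∑ j ∈ Icc 1 t, (truncatedInv t j - truncatedInv t (j + 1)) * j) / harmonic' t := by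
        rw [sum_div]
        refine sum_congr rfl fun j _ => ?_
        field_simp [hδ.1.ne', hγ.ne']
    _ = 1 := by
        rw [sum_Icc_sub_succ_mul_self, truncatedInv_succ_self, mul_zero, sub_zero,
          sum_truncatedInv, div_self hL.ne']
end

section
/- Let E_{(1)} ≥ ... ≥ E_{(m)} be the order statistics (in decreasing order) of nonnegative numbers E_1,...,E_m, let δ ∈ (0,1], and define r* = max{ r ∈ [m] : sum_{i=1}^r min( E_{(i)}/m − 1/(δ r), 1/m ) + sum_{i=r+1}^m (1/m) min(E_{(i)}, 1) ≥ 0 } (r* = 0 if no such r exists). Then r* ≥ r_eBH := max{ r ∈ [m] : |{i : E_i ≥ m/(δ r)}| ≥ r } (with r_eBH = 0 if empty); i.e., donation e-BH makes at least as many discoveries as e-BH on every realization. -/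
open Classical in
/-- Donation e-BH makes at least as many discoveries as e-BH on every realization:
with `Eord` the decreasing rearrangement of the nonnegative values `E` on
`{0, …, m−1}`, the largest `r ∈ [m]` satisfying the donation criterion is at least
the largest `r ∈ [m]` satisfying the e-BH criterion (both `0` if none exists). -/
theorem donation_ebh_ge_ebh
    (m : ℕ) (hm : 1 ≤ m)
    (δ : ℝ) (hδ : δ ∈ Set.Ioc (0 : ℝ) 1)
    (E Eord : ℕ → ℝ)
    (hE : ∀ i, 0 ≤ E i)
    (hperm : (Finset.range m).val.map Eord = (Finset.range m).val.map E)
    (hsorted : ∀ i j : ℕ, i ≤ j → j < m → Eord j ≤ Eord i) :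
    (((Finset.Icc 1 m).filter (fun r : ℕ =>
        r ≤ ((Finset.range m).filter (fun i => (m : ℝ) / (δ * (r : ℝ)) ≤ E i)).card)).sup id : ℕ)
    ≤ (((Finset.Icc 1 m).filter (fun r : ℕ =>
        0 ≤ ∑ i ∈ Finset.range r, min (Eord i / (m : ℝ) - 1 / (δ * (r : ℝ))) (1 / (m : ℝ))
          + ∑ i ∈ Finset.Ico r m, (1 / (m : ℝ)) * min (Eord i) 1)).sup id : ℕ) := by
  apply Finset.sup_le
  intro r hr
  simp only [Finset.mem_filter, Finset.mem_Icc] at hr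
  obtain ⟨⟨hr1, hrm⟩, hcard⟩ := hr
  have hδ0 : 0 < δ := hδ.1
  have hr0 : (0:ℝ) < r := by exact_mod_cast hr1
  have hδr : 0 < δ * r := mul_pos hδ0 hr0
  have hm0 : (0:ℝ) < m := by exact_mod_cast hm
  have hEord0 : ∀ i, i < m → 0 ≤ Eord i := by
    intro i hi
    have hmem : Eord i ∈ (Finset.range m).val.map Eord :=
      Multiset.mem_map_of_mem _ (by simpa using hi)
    rw [hperm] at hmem
    obtain ⟨j, _, hj⟩ := Multiset.mem_map.mp hmem
    rw [← hj]; exact hE j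
  set c : ℝ := (m:ℝ) / (δ * r) with hc
  have hcardeq : ((Finset.range m).filter (fun i => c ≤ Eord i)).card
      = ((Finset.range m).filter (fun i => c ≤ E i)).card := by
    have h1 := congrArg (Multiset.countP (fun x => c ≤ x)) hperm
    simp only [Multiset.countP_map] at h1
    have h2 : ∀ (f : ℕ → ℝ), ((Finset.range m).filter (fun i => c ≤ f i)).card
        = Multiset.card ((Finset.range m).val.filter (fun i => c ≤ f i)) := by
      intro f; rfl
    rw [h2, h2]
    convert h1 using 2
  have hkey : ∀ i, i < r → c ≤ Eord i := by
    intro i hir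
    by_contra h
    push_neg at h
    have hsub : ((Finset.range m).filter (fun j => c ≤ Eord j)) ⊆ Finset.range i := by
      intro j hj
      simp only [Finset.mem_filter, Finset.mem_range] at hj ⊢
      by_contra hji
      push_neg at hji
      exact absurd (le_trans hj.2 (hsorted i j hji hj.1)) (not_le.mpr h)
    have hle := Finset.card_le_card hsub
    rw [Finset.card_range] at hle
    omega
  have hmem : r ∈ (Finset.Icc 1 m).filter (fun r : ℕ =>
      0 ≤ ∑ i ∈ Finset.range r, min (Eord i / (m : ℝ) - 1 / (δ * (r : ℝ))) (1 / (m : ℝ))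
        + ∑ i ∈ Finset.Ico r m, (1 / (m : ℝ)) * min (Eord i) 1) := by
    simp only [Finset.mem_filter, Finset.mem_Icc]
    refine ⟨⟨hr1, hrm⟩, add_nonneg ?_ ?_⟩
    · apply Finset.sum_nonneg
      intro i hi
      simp only [Finset.mem_range] at hi
      apply le_min
      · have h1 : (m:ℝ) ≤ Eord i * (δ*r) := (div_le_iff₀ hδr).mp (hkey i hi)
        have h2 : 1/(δ*r) ≤ Eord i / (m:ℝ) := by
          rw [div_le_div_iff₀ hδr hm0]; nlinarith
        linarith
      · positivity
    · apply Finset.sum_nonneg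
      intro i hi
      have hi' : i < m := (Finset.mem_Ico.mp hi).2
      exact mul_nonneg (by positivity) (le_min (hEord0 i hi') zero_le_one)
  exact Finset.le_sup (f := id) hmem
end

section
/- Stochastic rounding preserves the e-value property: if X ≥ 0 is a random variable, α̂ ∈ (0,1] is a random threshold possibly dependent on X, and U is uniform on [0,1] independent of (X, α̂), then S := 1{U ≤ α̂ X} / α̂ satisfies E[S] ≤ E[X]. -/
open MeasureTheory ProbabilityTheory
open Classical in
/-- Stochastic rounding preserves the e-value property: for `X ≥ 0`, a random
threshold `α̂ ∈ (0,1]` possibly dependent on `X`, and `U` uniform on `[0,1]`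
independent of `(X, α̂)`, the rounded variable `S = 1{U ≤ α̂ X}/α̂` satisfies
`𝔼[S] ≤ 𝔼[X]`. -/
theorem stochastic_rounding_evalue
    {Ω : Type*} [MeasurableSpace Ω] (μ : Measure Ω) [IsProbabilityMeasure μ]
    (X αhat U : Ω → ℝ)
    (hX : Measurable X) (hα : Measurable αhat) (hU : Measurable U)
    (hXnn : ∀ ω, 0 ≤ X ω) (hXint : Integrable X μ)
    (hαmem : ∀ ω, αhat ω ∈ Set.Ioc (0 : ℝ) 1)
    (hUdist : μ.map U = volume.restrict (Set.Icc (0 : ℝ) 1))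
    (hindep : IndepFun U (fun ω => (X ω, αhat ω)) μ) :
    ∫ ω, (if U ω ≤ αhat ω * X ω then (1 : ℝ) else 0) / αhat ω ∂μ ≤ ∫ ω, X ω ∂μ := by
  set pair : Ω → ℝ × ℝ := fun ω => (X ω, αhat ω) with hpair_def
  have hpair : Measurable pair := hX.prodMk hα
  set G : ℝ × (ℝ × ℝ) → ENNReal :=
    fun p => ENNReal.ofReal ((if p.1 ≤ p.2.2 * p.2.1 then (1:ℝ) else 0) / p.2.2) with hG_def
  have hG : Measurable G := by
    apply ENNReal.measurable_ofReal.comp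
    apply Measurable.div
    · exact Measurable.ite (measurableSet_le measurable_fst
        (measurable_snd.snd.mul measurable_snd.fst)) measurable_const measurable_const
    · exact measurable_snd.snd
  have hmap : μ.map (fun ω => (U ω, pair ω)) = (μ.map U).prod (μ.map pair) :=
    (indepFun_iff_map_prod_eq_prod_map_map hU.aemeasurable hpair.aemeasurable).mp hindep
  haveI : IsProbabilityMeasure (μ.map pair) := Measure.isProbabilityMeasure_map hpair.aemeasurable
  -- key lintegral bound
  have hinner : ∀ᵐ v ∂(μ.map pair),
      (∫⁻ u, G (u, v) ∂(volume.restrict (Set.Icc (0:ℝ) 1))) ≤ ENNReal.ofReal v.1 := by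
    have hae : ∀ᵐ v ∂(μ.map pair), 0 ≤ v.1 ∧ v.2 ∈ Set.Ioc (0:ℝ) 1 := by
      rw [ae_map_iff hpair.aemeasurable]
      · exact Filter.Eventually.of_forall fun ω => ⟨hXnn ω, hαmem ω⟩
      · exact (measurableSet_le measurable_const measurable_fst).inter
          ((measurableSet_Ioc : MeasurableSet (Set.Ioc (0:ℝ) 1)).preimage measurable_snd)
    filter_upwards [hae] with v hv
    obtain ⟨hx, ha0, ha1⟩ := And.intro hv.1 (And.intro hv.2.1 hv.2.2)
    obtain ⟨x, a⟩ := v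
    simp only at hx ha0 ha1 ⊢
    have hGv : ∀ u, G (u, (x, a)) = (Set.Iic (a * x)).indicator
        (fun _ => ENNReal.ofReal (1 / a)) u := by
      intro u
      by_cases h : u ≤ a * x <;>
        simp [hG_def, Set.indicator, h, Set.mem_Iic]
    simp only [hGv]
    rw [lintegral_indicator measurableSet_Iic _]
    simp only [lintegral_const, Measure.restrict_restrict measurableSet_Iic]
    have hax : 0 ≤ a * x := mul_nonneg ha0.le hx
    have hvol : (volume (Set.Iic (a*x) ∩ Set.Icc (0:ℝ) 1)) = ENNReal.ofReal (min (a*x) 1) := by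
      have : Set.Iic (a*x) ∩ Set.Icc (0:ℝ) 1 = Set.Icc 0 (min (a*x) 1) := by
        ext u
        simp only [Set.mem_inter_iff, Set.mem_Iic, Set.mem_Icc, le_min_iff]
        tauto
      rw [this, Real.volume_Icc, sub_zero]
    rw [Measure.restrict_apply_univ, hvol, ← ENNReal.ofReal_mul (by positivity)]
    apply ENNReal.ofReal_le_ofReal
    calc 1 / a * min (a * x) 1 ≤ 1 / a * (a * x) := by
          apply mul_le_mul_of_nonneg_left (min_le_left _ _) (by positivity)
      _ = x := by field_simp
  have key : (∫⁻ ω, ENNReal.ofReal ((if U ω ≤ αhat ω * X ω then (1:ℝ) else 0) / αhat ω) ∂μ)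
      ≤ ∫⁻ ω, ENNReal.ofReal (X ω) ∂μ := by
    have h1 : (∫⁻ ω, ENNReal.ofReal ((if U ω ≤ αhat ω * X ω then (1:ℝ) else 0) / αhat ω) ∂μ)
        = ∫⁻ p, G p ∂((volume.restrict (Set.Icc (0:ℝ) 1)).prod (μ.map pair)) := by
      rw [← hUdist, ← hmap, lintegral_map hG (hU.prodMk hpair)]
    rw [h1, lintegral_prod_symm _ hG.aemeasurable]
    calc (∫⁻ v, ∫⁻ u, G (u, v) ∂(volume.restrict (Set.Icc (0:ℝ) 1)) ∂(μ.map pair))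
        ≤ ∫⁻ v, ENNReal.ofReal v.1 ∂(μ.map pair) := lintegral_mono_ae hinner
      _ = ∫⁻ ω, ENNReal.ofReal (X ω) ∂μ := by
          exact lintegral_map (f := fun v : ℝ × ℝ => ENNReal.ofReal v.1) (by fun_prop) hpair
  -- convert to real integrals
  have hfin : (∫⁻ ω, ENNReal.ofReal (X ω) ∂μ) < ⊤ := by
    have := hXint.hasFiniteIntegral
    simpa [HasFiniteIntegral, fun ω => Real.enorm_eq_ofReal (hXnn ω)] using this
  have hfnn : ∀ ω, 0 ≤ (if U ω ≤ αhat ω * X ω then (1:ℝ) else 0) / αhat ω := by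
    intro ω
    have := (hαmem ω).1
    positivity
  have hfm : AEStronglyMeasurable
      (fun ω => (if U ω ≤ αhat ω * X ω then (1:ℝ) else 0) / αhat ω) μ := by
    apply Measurable.aestronglyMeasurable
    exact Measurable.div (Measurable.ite (measurableSet_le hU (hα.mul hX))
      measurable_const measurable_const) hα
  rw [integral_eq_lintegral_of_nonneg_ae (Filter.Eventually.of_forall hfnn) hfm,
    integral_eq_lintegral_of_nonneg_ae (Filter.Eventually.of_forall hXnn)
      hX.aestronglyMeasurable]
  exact ENNReal.toReal_mono hfin.ne key
end

section
/- Restricted stochastic rounding preserves the e-value property: for X ≥ 0, α̂ ∈ (0,1) a random threshold possibly dependent on X, and U uniform on [0,1] independent of (X, α̂), define S̄ = X if X ≤ 1 or X ≥ α̂^{-1}, and S̄ = 1 + 1{U ≤ α̂(X−1)/(1−α̂)}(α̂^{-1} − 1) if X ∈ (1, α̂^{-1}). Then E[S̄] ≤ E[X]. Moreover S̄ ≥ 1 whenever X ≥ 1. -/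
open MeasureTheory ProbabilityTheory
open scoped ENNReal

open Classical in
private lemma rsr_inner_calc (x a : ℝ) (hx : 0 ≤ x) (ha : 0 < a) (ha1 : a < 1) :
    ∫⁻ u in Set.Icc (0:ℝ) 1,
      (if x ≤ 1 ∨ a⁻¹ ≤ x then ENNReal.ofReal x
       else if u ≤ a * (x - 1) / (1 - a) then ENNReal.ofReal a⁻¹ else 1) ∂volume
      = ENNReal.ofReal x := by
  by_cases h : x ≤ 1 ∨ a⁻¹ ≤ x
  · simp only [if_pos h]
    rw [lintegral_const, Measure.restrict_apply_univ, Real.volume_Icc]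
    norm_num
  · simp only [if_neg h]
    push_neg at h
    obtain ⟨h1, h2⟩ := h
    have h1a : 0 < 1 - a := by linarith
    set t := a * (x - 1) / (1 - a) with htdef
    have ht0 : 0 ≤ t := by
      apply div_nonneg _ h1a.le
      nlinarith
    have hax : a * x < 1 := by
      have h3 : a * x < a * a⁻¹ := mul_lt_mul_of_pos_left h2 ha
      rwa [mul_inv_cancel₀ ha.ne'] at h3
    have ht1 : t ≤ 1 := by
      rw [div_le_one h1a]; nlinarith
    have hfun : (fun u : ℝ => if u ≤ t then ENNReal.ofReal a⁻¹ else 1)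
        = fun u => (Set.Iic t).indicator (fun _ => ENNReal.ofReal a⁻¹) u
            + (Set.Iic t)ᶜ.indicator (fun _ => (1:ℝ≥0∞)) u := by
      funext u
      by_cases hu : u ≤ t
      · simp [hu, Set.indicator_apply]
      · simp [hu, Set.indicator_apply, lt_of_not_ge hu]
    calc ∫⁻ u in Set.Icc (0:ℝ) 1,
          (if u ≤ t then ENNReal.ofReal a⁻¹ else 1) ∂volume
        = ∫⁻ u in Set.Icc (0:ℝ) 1,
            ((Set.Iic t).indicator (fun _ => ENNReal.ofReal a⁻¹) u
              + (Set.Iic t)ᶜ.indicator (fun _ => (1:ℝ≥0∞)) u) ∂volume := by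
          rw [← hfun]
      _ = ENNReal.ofReal a⁻¹ * (volume.restrict (Set.Icc (0:ℝ) 1)) (Set.Iic t)
            + 1 * (volume.restrict (Set.Icc (0:ℝ) 1)) (Set.Iic t)ᶜ := by
          rw [lintegral_add_left (measurable_const.indicator measurableSet_Iic),
            lintegral_indicator measurableSet_Iic,
            lintegral_indicator measurableSet_Iic.compl,
            setLIntegral_const, setLIntegral_const]
      _ = ENNReal.ofReal x := by
          rw [Measure.restrict_apply measurableSet_Iic,
            Measure.restrict_apply measurableSet_Iic.compl]
          have hs1 : Set.Iic t ∩ Set.Icc (0:ℝ) 1 = Set.Icc 0 t := by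
            ext u
            simp only [Set.mem_inter_iff, Set.mem_Iic, Set.mem_Icc]
            constructor
            · rintro ⟨hut, hu0, _⟩; exact ⟨hu0, hut⟩
            · rintro ⟨hu0, hut⟩; exact ⟨hut, hu0, hut.trans ht1⟩
          have hs2 : (Set.Iic t)ᶜ ∩ Set.Icc (0:ℝ) 1 = Set.Ioc t 1 := by
            ext u
            simp only [Set.mem_inter_iff, Set.mem_compl_iff, Set.mem_Iic, Set.mem_Icc,
              Set.mem_Ioc, not_le]
            constructor
            · rintro ⟨htu, _, hu1⟩; exact ⟨htu, hu1⟩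
            · rintro ⟨htu, hu1⟩; exact ⟨htu, (ht0.trans htu.le), hu1⟩
          rw [hs1, hs2, Real.volume_Icc, Real.volume_Ioc, sub_zero, one_mul,
            ← ENNReal.ofReal_mul (by positivity), ← ENNReal.ofReal_add (by positivity)
              (by linarith)]
          congr 1
          rw [htdef]
          field_simp
          ring
  done

open Classical in
/-- Restricted stochastic rounding preserves the e-value property: for `X ≥ 0`,
a random threshold `α̂ ∈ (0,1)` possibly dependent on `X`, and `U` uniform on
`[0,1]` independent of `(X, α̂)`, the variable `S̄` (equal to `X` when `X ≤ 1` or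
`X ≥ α̂⁻¹`, and to `1 + 1{U ≤ α̂(X−1)/(1−α̂)}(α̂⁻¹ − 1)` when `X ∈ (1, α̂⁻¹)`)
satisfies `𝔼[S̄] ≤ 𝔼[X]`; moreover `S̄ ≥ 1` whenever `X ≥ 1`. -/
theorem restricted_stochastic_rounding_evalue
    {Ω : Type*} [MeasurableSpace Ω] (μ : Measure Ω) [IsProbabilityMeasure μ]
    (X αhat U : Ω → ℝ)
    (hX : Measurable X) (hα : Measurable αhat) (hU : Measurable U)
    (hXnn : ∀ ω, 0 ≤ X ω) (hXint : Integrable X μ)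
    (hαmem : ∀ ω, αhat ω ∈ Set.Ioo (0 : ℝ) 1)
    (hUdist : μ.map U = volume.restrict (Set.Icc (0 : ℝ) 1))
    (hindep : IndepFun U (fun ω => (X ω, αhat ω)) μ)
    (Sbar : Ω → ℝ)
    (hSbar : ∀ ω, Sbar ω =
      if X ω ≤ 1 ∨ (αhat ω)⁻¹ ≤ X ω then X ω
      else 1 + (if U ω ≤ αhat ω * (X ω - 1) / (1 - αhat ω) then (1 : ℝ) else 0) *
        ((αhat ω)⁻¹ - 1)) :
    (∫ ω, Sbar ω ∂μ ≤ ∫ ω, X ω ∂μ) ∧ (∀ ω, 1 ≤ X ω → 1 ≤ Sbar ω) := by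
  have hα0 : ∀ ω, 0 < αhat ω := fun ω => (hαmem ω).1
  have hα1 : ∀ ω, αhat ω < 1 := fun ω => (hαmem ω).2
  have hαinv1 : ∀ ω, 1 ≤ (αhat ω)⁻¹ := fun ω =>
    (one_le_inv₀ (hα0 ω)).mpr (hα1 ω).le
  constructor
  · -- integral part
    -- measurability facts
    have hset1 : MeasurableSet {ω | X ω ≤ 1 ∨ (αhat ω)⁻¹ ≤ X ω} :=
      (measurableSet_le hX measurable_const).union (measurableSet_le hα.inv hX)
    have hset2 : MeasurableSet {ω | U ω ≤ αhat ω * (X ω - 1) / (1 - αhat ω)} :=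
      measurableSet_le hU ((hα.mul (hX.sub measurable_const)).div
        (measurable_const.sub hα))
    have hSmeas : Measurable Sbar := by
      rw [funext hSbar]
      exact Measurable.ite hset1 hX
        (measurable_const.add ((Measurable.ite hset2 measurable_const
          measurable_const).mul (hα.inv.sub measurable_const)))
    have hSnn : ∀ ω, 0 ≤ Sbar ω := by
      intro ω
      rw [hSbar ω]
      split_ifs with h h2
      · exact hXnn ω
      · nlinarith [hαinv1 ω]
      · norm_num
    -- the ENNReal-valued kernel
    set F : ℝ × ℝ × ℝ → ℝ≥0∞ := fun q =>
      if q.2.1 ≤ 1 ∨ q.2.2⁻¹ ≤ q.2.1 then ENNReal.ofReal q.2.1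
      else if q.1 ≤ q.2.2 * (q.2.1 - 1) / (1 - q.2.2) then ENNReal.ofReal q.2.2⁻¹
      else 1 with hFdef
    have hF : Measurable F := by
      apply Measurable.ite
      · exact (measurableSet_le measurable_snd.fst measurable_const).union
          (measurableSet_le measurable_snd.snd.inv measurable_snd.fst)
      · exact measurable_snd.fst.ennreal_ofReal
      · apply Measurable.ite
        · exact measurableSet_le measurable_fst
            ((measurable_snd.snd.mul (measurable_snd.fst.sub measurable_const)).div
              (measurable_const.sub measurable_snd.snd))
        · exact measurable_snd.snd.inv.ennreal_ofReal
        · exact measurable_const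
    have hT : Measurable (fun ω => (U ω, X ω, αhat ω)) := hU.prodMk (hX.prodMk hα)
    have hpair : Measurable (fun ω => (X ω, αhat ω)) := hX.prodMk hα
    set ν := μ.map (fun ω => (X ω, αhat ω)) with hνdef
    have hνprob : IsProbabilityMeasure ν := Measure.isProbabilityMeasure_map hpair.aemeasurable
    have hmap : μ.map (fun ω => (U ω, X ω, αhat ω)) = (μ.map U).prod ν :=
      (indepFun_iff_map_prod_eq_prod_map_map hU.aemeasurable hpair.aemeasurable).mp hindep
    have hFS : ∀ ω, ENNReal.ofReal (Sbar ω) = F (U ω, X ω, αhat ω) := by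
      intro ω
      rw [hSbar ω, hFdef]
      by_cases h : X ω ≤ 1 ∨ (αhat ω)⁻¹ ≤ X ω
      · simp [h]
      · by_cases h2 : U ω ≤ αhat ω * (X ω - 1) / (1 - αhat ω)
        · simp only [if_neg h, if_pos h2, one_mul]
          congr 1
          ring
        · simp only [if_neg h, if_neg h2, zero_mul, add_zero]
          exact ENNReal.ofReal_one
    have hνae : ∀ᵐ p ∂ν, 0 ≤ p.1 ∧ 0 < p.2 ∧ p.2 < 1 := by
      rw [hνdef, ae_map_iff hpair.aemeasurable]
      · exact ae_of_all _ fun ω => ⟨hXnn ω, hα0 ω, hα1 ω⟩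
      · exact ((measurableSet_le measurable_const measurable_fst).inter
          (((measurableSet_lt measurable_const measurable_snd)).inter
            (measurableSet_lt measurable_snd measurable_const)))
    have key : ∫⁻ ω, ENNReal.ofReal (Sbar ω) ∂μ = ∫⁻ ω, ENNReal.ofReal (X ω) ∂μ := by
      calc ∫⁻ ω, ENNReal.ofReal (Sbar ω) ∂μ
          = ∫⁻ ω, F (U ω, X ω, αhat ω) ∂μ := lintegral_congr hFS
        _ = ∫⁻ q, F q ∂(μ.map (fun ω => (U ω, X ω, αhat ω))) :=
            (lintegral_map hF hT).symm
        _ = ∫⁻ q, F q ∂((volume.restrict (Set.Icc (0:ℝ) 1)).prod ν) := by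
            rw [hmap, hUdist]
        _ = ∫⁻ p, ∫⁻ u, F (u, p) ∂(volume.restrict (Set.Icc (0:ℝ) 1)) ∂ν :=
            lintegral_prod_symm F hF.aemeasurable
        _ = ∫⁻ p, ENNReal.ofReal p.1 ∂ν := by
            apply lintegral_congr_ae
            filter_upwards [hνae] with p hp
            exact rsr_inner_calc p.1 p.2 hp.1 hp.2.1 hp.2.2
        _ = ∫⁻ ω, ENNReal.ofReal (X ω) ∂μ := by
            rw [hνdef, lintegral_map measurable_fst.ennreal_ofReal hpair]
    rw [integral_eq_lintegral_of_nonneg_ae (ae_of_all _ hSnn) hSmeas.aestronglyMeasurable,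
      integral_eq_lintegral_of_nonneg_ae (ae_of_all _ hXnn) hX.aestronglyMeasurable, key]
  · intro ω h1
    rw [hSbar ω]
    split_ifs with h h2
    · exact h1
    · nlinarith [hαinv1 ω]
    · norm_num
end
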